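/- For a piecewise constant function f : ℝ → ℝ with thresholds η_1 < ... < η_k and interval values c_0, ..., c_k that is not monotone, the supremum of glitch magnitudes over all glitches of f equals the maximum over triples of partition cells I₁, I₂, I₃ (in order, with oscillating values v₁, v₂, v₃) of min(|v₂−v₁|, |v₂−v₃|) / (inf I₃ − sup I₁), where sup I₁ and inf I₃ are the relevant thresholds. -/

import Mathlib

private lemma card_val_lt {k : ℕ} (j : ℕ) (hj : j ≤ k) :
    (Finset.univ.filter fun t : Fin k => (t : ℕ) < j).card = j := by
  have h : (Finset.univ.filter fun t : Fin k => (t : ℕ) < j)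
      = Finset.image (Fin.castLE hj) Finset.univ := by
    ext t
    simp only [Finset.mem_filter, Finset.mem_univ, true_and, Finset.mem_image]
    constructor
    · intro ht; exact ⟨⟨t, ht⟩, rfl⟩
    · rintro ⟨s, rfl⟩; exact s.isLt
  rw [h, Finset.card_image_of_injective _ (Fin.castLE_injective hj)]
  simp

private lemma lt_card_iff {k : ℕ} {η : Fin k → ℝ} (hη : StrictMono η) (x : ℝ) (t : Fin k) :
    η t < x ↔ (t : ℕ) < (Finset.univ.filter fun s : Fin k => η s < x).card := by
  constructor
  · intro h
    have hsub : (Finset.univ.filter fun s : Fin k => (s : ℕ) < (t : ℕ) + 1)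
        ⊆ Finset.univ.filter fun s : Fin k => η s < x := by
      intro s hs
      simp only [Finset.mem_filter, Finset.mem_univ, true_and] at hs ⊢
      have hst : s ≤ t := by rw [Fin.le_def]; omega
      exact lt_of_le_of_lt (hη.monotone hst) h
    have := Finset.card_le_card hsub
    rw [card_val_lt ((t : ℕ) + 1) t.isLt] at this
    omega
  · intro h
    by_contra hx
    push_neg at hx
    have hsub : (Finset.univ.filter fun s : Fin k => η s < x)
        ⊆ Finset.univ.filter fun s : Fin k => (s : ℕ) < (t : ℕ) := by
      intro s hs
      simp only [Finset.mem_filter, Finset.mem_univ, true_and] at hs ⊢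
      have h2 : η s < η t := lt_of_lt_of_le hs hx
      have := hη.lt_iff_lt.mp h2
      rwa [Fin.lt_def] at this
    have := Finset.card_le_card hsub
    rw [card_val_lt (t : ℕ) t.isLt.le] at this
    omega

private lemma card_eq_of {k : ℕ} {η : Fin k → ℝ} (x : ℝ) (j : ℕ) (hj : j ≤ k)
    (h1 : ∀ t : Fin k, (t : ℕ) < j → η t < x) (h2 : ∀ t : Fin k, j ≤ (t : ℕ) → x ≤ η t) :
    (Finset.univ.filter fun s : Fin k => η s < x).card = j := by
  have h : (Finset.univ.filter fun s : Fin k => η s < x)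
      = Finset.univ.filter fun s : Fin k => (s : ℕ) < j := by
    ext s
    simp only [Finset.mem_filter, Finset.mem_univ, true_and]
    constructor
    · intro hs
      by_contra hc
      push_neg at hc
      exact absurd hs (not_lt.mpr (h2 s hc))
    · exact h1 s
  rw [h, card_val_lt j hj]

private lemma card_at_eta {k : ℕ} {η : Fin k → ℝ} (hη : StrictMono η) (q : Fin k) :
    (Finset.univ.filter fun s : Fin k => η s < η q).card = (q : ℕ) := by
  apply card_eq_of _ _ q.isLt.le
  · intro t ht
    exact hη (by rw [Fin.lt_def]; omega)
  · intro t ht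
    exact hη.monotone (by rw [Fin.le_def]; omega)


private lemma aux_arith {M D δ ε : ℝ} (hM : 0 < M) (hD : 0 < D) (hδ : 0 < δ) (hε : 0 < ε)
    (hδle : δ ≤ ε * D ^ 2 / (M + 1)) : M / D - M / (D + δ) ≤ ε := by
  have hDδ : 0 < D + δ := by linarith
  have heq : M / D - M / (D + δ) = M * δ / (D * (D + δ)) := by
    field_simp
    ring
  rw [heq, div_le_iff₀ (by positivity)]
  have hδle' : δ * (M + 1) ≤ ε * D ^ 2 := by
    rwa [le_div_iff₀ (by positivity)] at hδle
  nlinarith [mul_nonneg (mul_nonneg hε.le hD.le) hδ.le]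

/-- for a non-monotone piecewise constant `f : ℝ → ℝ` with thresholds
`η 0 < ... < η (k-1)` and interval values `c 0, ..., c k`, the supremum of glitch
magnitudes equals the maximum over ordered triples of partition cells, with
oscillating values, of `min(|v₂ - v₁|, |v₂ - v₃|) / (inf I₃ - sup I₁)`, where
`sup I₁ = η j₁` and `inf I₃ = η (j₃ - 1)`. -/
theorem stmt_15 {k : ℕ} (f : ℝ → ℝ) (η : Fin k → ℝ) (hη : StrictMono η)
    (c : Fin (k + 1) → ℝ)
    (hf : ∀ x : ℝ, f x =
      c ⟨(Finset.univ.filter fun t : Fin k => η t < x).card,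
        Nat.lt_succ_of_le ((Finset.card_filter_le _ _).trans (by simp))⟩)
    (hnotmono : ¬ (Monotone c ∨ Antitone c)) :
    sSup {α : ℝ | ∃ xm x xp : ℝ, xm < x ∧ x < xp ∧
        ((f xm > f x ∧ f x < f xp) ∨ (f xm < f x ∧ f x > f xp)) ∧
        α = min |f x - f xm| |f x - f xp| / (xp - xm)} =
    sSup {v : ℝ | ∃ j₁ j₂ j₃ : ℕ, ∃ (_ : j₁ < j₂) (_ : j₂ < j₃) (_ : j₃ ≤ k),
        ((c ⟨j₁, by omega⟩ > c ⟨j₂, by omega⟩ ∧ c ⟨j₂, by omega⟩ < c ⟨j₃, by omega⟩) ∨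
         (c ⟨j₁, by omega⟩ < c ⟨j₂, by omega⟩ ∧ c ⟨j₂, by omega⟩ > c ⟨j₃, by omega⟩)) ∧
        v = min |c ⟨j₂, by omega⟩ - c ⟨j₁, by omega⟩| |c ⟨j₂, by omega⟩ - c ⟨j₃, by omega⟩| /
            (η ⟨j₃ - 1, by omega⟩ - η ⟨j₁, by omega⟩)} := by
  classical
  set A := {α : ℝ | ∃ xm x xp : ℝ, xm < x ∧ x < xp ∧
        ((f xm > f x ∧ f x < f xp) ∨ (f xm < f x ∧ f x > f xp)) ∧
        α = min |f x - f xm| |f x - f xp| / (xp - xm)} with hAdef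
  set B := {v : ℝ | ∃ j₁ j₂ j₃ : ℕ, ∃ (_ : j₁ < j₂) (_ : j₂ < j₃) (_ : j₃ ≤ k),
        ((c ⟨j₁, by omega⟩ > c ⟨j₂, by omega⟩ ∧ c ⟨j₂, by omega⟩ < c ⟨j₃, by omega⟩) ∨
         (c ⟨j₁, by omega⟩ < c ⟨j₂, by omega⟩ ∧ c ⟨j₂, by omega⟩ > c ⟨j₃, by omega⟩)) ∧
        v = min |c ⟨j₂, by omega⟩ - c ⟨j₁, by omega⟩| |c ⟨j₂, by omega⟩ - c ⟨j₃, by omega⟩| /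
            (η ⟨j₃ - 1, by omega⟩ - η ⟨j₁, by omega⟩)} with hBdef
  have ccong : ∀ (m n : ℕ) (hm : m < k + 1) (hn : n < k + 1), m = n →
      c ⟨m, hm⟩ = c ⟨n, hn⟩ := by rintro m n _ _ rfl; rfl
  have hNk : ∀ x : ℝ, (Finset.univ.filter fun t : Fin k => η t < x).card ≤ k :=
    fun x => (Finset.card_filter_le _ _).trans (by simp)
  -- extract an oscillating triple from non-monotonicity
  push_neg at hnotmono
  obtain ⟨a, b, d, hab, hbd, hosc0⟩ :=
    not_monotone_not_antitone_iff_exists_lt_lt.mp ⟨hnotmono.1, hnotmono.2⟩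
  have hab' : (a : ℕ) < (b : ℕ) := hab
  have hbd' : (b : ℕ) < (d : ℕ) := hbd
  have hdk : (d : ℕ) ≤ k := by omega
  have hd1k : (d : ℕ) - 1 < k := by omega
  have hak : (a : ℕ) < k := by omega
  have hD0 : (0:ℝ) < η ⟨(d : ℕ) - 1, hd1k⟩ - η ⟨(a : ℕ), hak⟩ := by
    have := hη (show (⟨(a : ℕ), hak⟩ : Fin k) < ⟨(d : ℕ) - 1, hd1k⟩ by
      rw [Fin.lt_def]; simp; omega)
    linarith
  have hM0 : (0:ℝ) < min |c b - c a| |c b - c d| := by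
    rcases hosc0 with ⟨h1, h2⟩ | ⟨h1, h2⟩ <;>
      exact lt_min (abs_pos.mpr (sub_ne_zero.mpr (by intro h; rw [h] at h1 h2; linarith)))
        (abs_pos.mpr (sub_ne_zero.mpr (by intro h; rw [h] at h1 h2; linarith)))
  set v₀ : ℝ := min |c b - c a| |c b - c d| / (η ⟨(d : ℕ) - 1, hd1k⟩ - η ⟨(a : ℕ), hak⟩)
    with hv₀def
  have hv₀pos : 0 < v₀ := div_pos hM0 hD0
  have hv₀B : v₀ ∈ B := by
    refine ⟨(a : ℕ), (b : ℕ), (d : ℕ), hab', hbd', hdk, ?_, ?_⟩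
    · exact hosc0.elim (fun h => Or.inr ⟨h.1, h.2⟩) (fun h => Or.inl ⟨h.1, h.2⟩)
    · rfl
  -- B is finite, hence bounded above
  have hBfin : B.Finite := by
    apply Set.Finite.subset (Set.finite_range (fun p : Fin k × Fin (k + 1) × Fin k =>
      min |c p.2.1 - c p.1.castSucc| |c p.2.1 - c p.2.2.succ| / (η p.2.2 - η p.1)))
    rintro v ⟨j₁, j₂, j₃, h12, h23, h3k, -, rfl⟩
    refine ⟨⟨⟨j₁, by omega⟩, ⟨j₂, by omega⟩, ⟨j₃ - 1, by omega⟩⟩, ?_⟩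
    simp only [Fin.castSucc_mk, Fin.succ_mk]
    rw [ccong (j₃ - 1 + 1) j₃ (by omega) (by omega) (by omega)]
  have hBbdd : BddAbove B := hBfin.bddAbove
  -- every glitch magnitude is dominated by some element of B
  have hdom : ∀ α ∈ A, ∃ v ∈ B, α ≤ v := by
    rintro α ⟨xm, x, xp, hx1, hx2, hosc, rfl⟩
    set j₁ := (Finset.univ.filter fun t : Fin k => η t < xm).card with hj₁
    set j₂ := (Finset.univ.filter fun t : Fin k => η t < x).card with hj₂
    set j₃ := (Finset.univ.filter fun t : Fin k => η t < xp).card with hj₃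
    have e1 : f xm = c ⟨j₁, Nat.lt_succ_of_le (hNk xm)⟩ := hf xm
    have e2 : f x = c ⟨j₂, Nat.lt_succ_of_le (hNk x)⟩ := hf x
    have e3 : f xp = c ⟨j₃, Nat.lt_succ_of_le (hNk xp)⟩ := hf xp
    have hm12 : j₁ ≤ j₂ := Finset.card_le_card
      (Finset.monotone_filter_right _ (fun t _ ht => lt_trans ht hx1))
    have hm23 : j₂ ≤ j₃ := Finset.card_le_card
      (Finset.monotone_filter_right _ (fun t _ ht => lt_trans ht hx2))
    have hne12 : f xm ≠ f x := by
      rcases hosc with ⟨h1, h2⟩ | ⟨h1, h2⟩ <;> [exact ne_of_gt h1; exact ne_of_lt h1]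
    have hne23 : f x ≠ f xp := by
      rcases hosc with ⟨h1, h2⟩ | ⟨h1, h2⟩ <;> [exact ne_of_lt h2; exact ne_of_gt h2]
    have h12 : j₁ < j₂ := lt_of_le_of_ne hm12 (by
      intro he
      exact hne12 (by rw [e1, e2]; exact ccong _ _ _ _ he))
    have h23 : j₂ < j₃ := lt_of_le_of_ne hm23 (by
      intro he
      exact hne23 (by rw [e2, e3]; exact ccong _ _ _ _ he))
    have h3k : j₃ ≤ k := hNk xp
    have hxp : η ⟨j₃ - 1, by omega⟩ < xp :=
      (lt_card_iff hη xp ⟨j₃ - 1, by omega⟩).mpr (by simp; omega)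
    have hxm : xm ≤ η ⟨j₁, by omega⟩ := by
      by_contra hc
      push_neg at hc
      have := (lt_card_iff hη xm ⟨j₁, by omega⟩).mp hc
      exact lt_irrefl _ this
    have hDpos : (0:ℝ) < η ⟨j₃ - 1, by omega⟩ - η ⟨j₁, by omega⟩ := by
      have := hη (show (⟨j₁, by omega⟩ : Fin k) < ⟨j₃ - 1, by omega⟩ by
        rw [Fin.lt_def]; simp; omega)
      linarith
    refine ⟨min |c ⟨j₂, by omega⟩ - c ⟨j₁, by omega⟩| |c ⟨j₂, by omega⟩ - c ⟨j₃, by omega⟩| /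
        (η ⟨j₃ - 1, by omega⟩ - η ⟨j₁, by omega⟩),
      ⟨j₁, j₂, j₃, h12, h23, h3k, ?_, rfl⟩, ?_⟩
    · rw [e1, e2, e3] at hosc
      exact hosc
    · rw [e1, e2, e3]
      exact div_le_div_of_nonneg_left (le_min (abs_nonneg _) (abs_nonneg _)) hDpos
        (by linarith)
  have hAbdd : BddAbove A := by
    refine ⟨sSup B, fun α hα => ?_⟩
    obtain ⟨v, hv, hle⟩ := hdom α hα
    exact hle.trans (le_csSup hBbdd hv)
  have hsupB0 : 0 ≤ sSup B := hv₀pos.le.trans (le_csSup hBbdd hv₀B)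
  apply le_antisymm
  · exact Real.sSup_le (fun α hα => (hdom α hα).elim
      (fun v hv => hv.2.trans (le_csSup hBbdd hv.1))) hsupB0
  · -- sSup B ≤ sSup A
    apply csSup_le ⟨v₀, hv₀B⟩
    rintro v ⟨j₁, j₂, j₃, h12, h23, h3k, hosc, rfl⟩
    apply le_of_forall_sub_le
    intro ε hε
    set M := min |c ⟨j₂, by omega⟩ - c ⟨j₁, by omega⟩| |c ⟨j₂, by omega⟩ - c ⟨j₃, by omega⟩|
      with hMdef
    have hj1k : j₁ < k := by omega
    have hj2k : j₂ < k := by omega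
    have hj31k : j₃ - 1 < k := by omega
    set q : Fin k := ⟨j₃ - 1, hj31k⟩ with hq
    set D := η q - η ⟨j₁, hj1k⟩ with hDdef
    have hD : 0 < D := by
      have := hη (show (⟨j₁, hj1k⟩ : Fin k) < q by rw [Fin.lt_def]; simp [hq]; omega)
      simp [hDdef]; linarith
    have hM : 0 < M := by
      rcases hosc with ⟨h1, h2⟩ | ⟨h1, h2⟩ <;>
        exact lt_min (abs_pos.mpr (sub_ne_zero.mpr (by intro h; rw [h] at h1; linarith)))
          (abs_pos.mpr (sub_ne_zero.mpr (by intro h; rw [h] at h1 h2; linarith)))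
    set gap : ℝ := if h : j₃ < k then η ⟨j₃, h⟩ - η q else 1 with hgapdef
    have hgap : 0 < gap := by
      rw [hgapdef]
      split
      · rename_i h
        have := hη (show q < (⟨j₃, h⟩ : Fin k) by rw [Fin.lt_def]; simp [hq]; omega)
        linarith
      · norm_num
    have hquot : 0 < ε * D ^ 2 / (M + 1) := by positivity
    set δ := min (ε * D ^ 2 / (M + 1)) gap / 2 with hδdef
    have hδ : 0 < δ := by
      rw [hδdef]; exact div_pos (lt_min hquot hgap) two_pos
    have hδgap : δ < gap := by
      have := min_le_right (ε * D ^ 2 / (M + 1)) gap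
      rw [hδdef]; linarith
    have hδle : δ ≤ ε * D ^ 2 / (M + 1) := by
      have h1 := min_le_left (ε * D ^ 2 / (M + 1)) gap
      have h2 := lt_min hquot hgap
      rw [hδdef]; linarith
    set xm := η (⟨j₁, hj1k⟩ : Fin k) with hxmdef
    set x := η (⟨j₂, hj2k⟩ : Fin k) with hxdef
    set xp := η q + δ with hxpdef
    have hNxm : (Finset.univ.filter fun t : Fin k => η t < xm).card = j₁ := card_at_eta hη _
    have hNx : (Finset.univ.filter fun t : Fin k => η t < x).card = j₂ := card_at_eta hη _
    have hNxp : (Finset.univ.filter fun t : Fin k => η t < xp).card = j₃ := by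
      apply card_eq_of _ _ (by omega)
      · intro t ht
        have h1 : η t ≤ η q := hη.monotone (by rw [Fin.le_def]; simp [hq]; omega)
        rw [hxpdef]; linarith
      · intro t ht
        have h3 : j₃ < k := lt_of_le_of_lt ht t.isLt
        have hg : gap = η ⟨j₃, h3⟩ - η q := by rw [hgapdef, dif_pos h3]
        have h1 : η (⟨j₃, h3⟩ : Fin k) ≤ η t := hη.monotone (by rw [Fin.le_def]; simp; omega)
        rw [hxpdef]; linarith
    have e1 : f xm = c ⟨j₁, by omega⟩ := by
      rw [hf xm]; exact ccong _ _ _ _ hNxm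
    have e2 : f x = c ⟨j₂, by omega⟩ := by
      rw [hf x]; exact ccong _ _ _ _ hNx
    have e3 : f xp = c ⟨j₃, by omega⟩ := by
      rw [hf xp]; exact ccong _ _ _ _ hNxp
    have hxmx : xm < x := hη (show (⟨j₁, hj1k⟩ : Fin k) < ⟨j₂, hj2k⟩ by
      rw [Fin.lt_def]; simp; omega)
    have hxxp : x < xp := by
      have h1 : η (⟨j₂, hj2k⟩ : Fin k) ≤ η q := hη.monotone (by
        rw [Fin.le_def]; simp [hq]; omega)
      rw [hxpdef, hxdef]; linarith
    have hαA : M / (D + δ) ∈ A := by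
      refine ⟨xm, x, xp, hxmx, hxxp, ?_, ?_⟩
      · rw [e1, e2, e3]; exact hosc
      · rw [e1, e2, e3, ← hMdef]
        congr 1
        rw [hxpdef, hxmdef, hDdef]; ring
    have hαle : M / (D + δ) ≤ sSup A := le_csSup hAbdd hαA
    have hkey : M / D - M / (D + δ) ≤ ε := aux_arith hM hD hδ hε hδle
    have hfin : M / D - ε ≤ sSup A := by linarith
    exact hfin
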